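/- arXiv:2312.05137 — 2 statements merged into one kernel-verified Lean document; each statement's English description precedes it below -/
import Mathlib

section
/- With the same setup (forms u and û = u + v, biorthogonal families P, P̂ with matrices H_n, Ĥ_n, CD kernel K_{n−1} of u), one has (P̂^{[2]}_n(z))ᵀ = (P^{[2]}_n(z))ᵀ − ⟨K_{n−1}(x,z), P̂^{[2]}_n(y)⟩_v. -/
/-!
Expand `P̂^{[2]}_n = ∑_{j ≤ n} A_j P^{[2]}_j` in the monic family `P^{[2]}_j`; monicity forces `A_n = I`.
Biorthogonality for `u` reads off `A_kᵀ = H_k⁻¹ ⟨P^{[1]}_k, P̂^{[2]}_n⟩_u`, while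
`⟨P^{[1]}_k, P̂^{[2]}_n⟩_û = 0` for `k < n`, since `P^{[1]}_k` lies in the span of `P̂^{[1]}_j`, `j ≤ k`.
Transposing the expansion then gives the formula.
-/

open Polynomial Matrix Finset

namespace Paper

abbrev Mat (p : ℕ) := Matrix (Fin p) (Fin p) ℂ
abbrev MatPoly (p : ℕ) := Matrix (Fin p) (Fin p) (Polynomial ℂ)

variable {p : ℕ}

/-- Embed a constant matrix as a matrix polynomial. -/
noncomputable def cm (A : Mat p) : MatPoly p := A.map Polynomial.C

/-- The monomial `I_p x^k` as a matrix polynomial. -/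
noncomputable def monoM (p k : ℕ) : MatPoly p := Matrix.diagonal (fun _ => (Polynomial.X : Polynomial ℂ) ^ k)

/-- The `k`-th matrix coefficient of a matrix polynomial. -/
noncomputable def coeffM (P : MatPoly p) (k : ℕ) : Mat p := Matrix.of fun i j => (P i j).coeff k

/-- Entrywise derivative of a matrix polynomial. -/
noncomputable def dM : MatPoly p → MatPoly p := fun P => Matrix.of fun i j => Polynomial.derivative (P i j)

/-- Evaluation of a matrix polynomial at a scalar point. -/
noncomputable def evM (z : ℂ) (P : MatPoly p) : Mat p := Matrix.of fun i j => (P i j).eval z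

/-- `P` is monic of exact degree `n`. -/
def MonicDeg (P : MatPoly p) (n : ℕ) : Prop :=
  coeffM P n = 1 ∧ ∀ k, n < k → coeffM P k = 0

/-- Sesquilinear form on matrix polynomials: left `ℂ^{p×p}`-linear in the first slot,
`⟨P, AQ + R⟩ = ⟨P,Q⟩Aᵀ + ⟨P,R⟩` in the second slot. -/
def IsSesq (S : MatPoly p → MatPoly p → Mat p) : Prop :=
  (∀ (A : Mat p) (P Q R : MatPoly p), S (cm A * P + Q) R = A * S P R + S Q R) ∧
  (∀ (A : Mat p) (P Q R : MatPoly p), S P (cm A * Q + R) = S P Q * Aᵀ + S P R)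

end Paper

namespace Paper

variable {p : ℕ}

lemma cm_one : cm (1 : Mat p) = 1 :=
  Matrix.map_one _ C_0 C_1

lemma cm_neg (A : Mat p) : cm (-A) = -cm A :=
  Matrix.map_neg _ (fun _ => C_neg) A

lemma transpose_cm_mul (A : Mat p) (P : MatPoly p) : (cm A * P)ᵀ = Pᵀ * cm Aᵀ := by
  rw [transpose_mul, cm, cm, transpose_map]

lemma coeffM_cm_mul (A : Mat p) (P : MatPoly p) (k : ℕ) :
    coeffM (cm A * P) k = A * coeffM P k := by
  ext i j
  simp [coeffM, cm, mul_apply, finsetSum_coeff]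

lemma coeffM_sub (P Q : MatPoly p) (k : ℕ) : coeffM (P - Q) k = coeffM P k - coeffM Q k := by
  ext i j
  simp [coeffM]

lemma coeffM_sum (s : Finset ℕ) (f : ℕ → MatPoly p) (k : ℕ) :
    coeffM (∑ j ∈ s, f j) k = ∑ j ∈ s, coeffM (f j) k := by
  ext i j
  simp [coeffM, Matrix.sum_apply, finsetSum_coeff]

lemma coeffM_injective : Function.Injective (coeffM : MatPoly p → ℕ → Mat p) := by
  intro P Q h
  ext i j k
  exact congrFun (congrFun (congrFun h k) i) j

lemma coeffM_sum_cm_mul_self {P : ℕ → MatPoly p} (hP : ∀ k, MonicDeg (P k) k)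
    (A : ℕ → Mat p) (n : ℕ) :
    coeffM (∑ j ∈ range (n + 1), cm (A j) * P j) n = A n := by
  rw [coeffM_sum, sum_range_succ, coeffM_cm_mul, (hP n).1, mul_one, add_eq_right]
  refine sum_eq_zero fun j hj => ?_
  rw [coeffM_cm_mul, (hP j).2 n (mem_range.1 hj), mul_zero]

lemma exists_eq_sum_cm_mul_of_monicDeg {P : ℕ → MatPoly p} (hP : ∀ k, MonicDeg (P k) k)
    {n : ℕ} {Q : MatPoly p} (hQ : ∀ k, n < k → coeffM Q k = 0) :
    ∃ A : ℕ → Mat p, Q = ∑ j ∈ range (n + 1), cm (A j) * P j := by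
  induction n generalizing Q with
  | zero =>
    refine ⟨fun _ => coeffM Q 0, coeffM_injective (funext fun k => ?_)⟩
    rw [sum_range_one, coeffM_cm_mul]
    rcases Nat.eq_zero_or_pos k with rfl | hk
    · rw [(hP 0).1, mul_one]
    · rw [hQ k hk, (hP 0).2 k hk, mul_zero]
  | succ n ih =>
    set c := coeffM Q (n + 1)
    obtain ⟨A, hA⟩ : ∃ A : ℕ → Mat p, Q - cm c * P (n + 1) = ∑ j ∈ range (n + 1), cm (A j) * P j := by
      refine ih fun k hk => ?_
      rw [coeffM_sub, coeffM_cm_mul]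
      rcases (Nat.succ_le_of_lt hk).eq_or_lt with rfl | hk'
      · rw [(hP _).1, mul_one, sub_self]
      · rw [hQ k hk', (hP _).2 k hk', mul_zero, sub_self]
    refine ⟨Function.update A (n + 1) c, ?_⟩
    rw [sum_range_succ, Function.update_self, ← sub_eq_iff_eq_add, hA]
    refine sum_congr rfl fun j hj => ?_
    rw [Function.update_of_ne (mem_range.1 hj).ne]

namespace IsSesq

variable {S : MatPoly p → MatPoly p → Mat p}

lemma zero_left (hS : IsSesq S) (R : MatPoly p) : S 0 R = 0 := by
  simpa [cm_one] using hS.1 1 0 0 R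

lemma zero_right (hS : IsSesq S) (R : MatPoly p) : S R 0 = 0 := by
  simpa [cm_one] using hS.2 1 R 0 0

lemma sum_cm_mul_left (hS : IsSesq S) (s : Finset ℕ) (A : ℕ → Mat p) (P : ℕ → MatPoly p)
    (R : MatPoly p) : S (∑ j ∈ s, cm (A j) * P j) R = ∑ j ∈ s, A j * S (P j) R := by
  induction s using Finset.induction_on with
  | empty => simpa using hS.zero_left R
  | insert j s hj ih => rw [sum_insert hj, sum_insert hj, hS.1, ih]

lemma sum_cm_mul_right (hS : IsSesq S) (s : Finset ℕ) (A : ℕ → Mat p) (Q : ℕ → MatPoly p)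
    (R : MatPoly p) : S R (∑ j ∈ s, cm (A j) * Q j) = ∑ j ∈ s, S R (Q j) * (A j)ᵀ := by
  induction s using Finset.induction_on with
  | empty => simpa using hS.zero_right R
  | insert j s hj ih => rw [sum_insert hj, sum_insert hj, hS.2, ih]

variable {P1 P2 : ℕ → MatPoly p} {H : ℕ → Mat p}

lemma apply_sum_cm_mul_of_biorthogonal (hS : IsSesq S)
    (hbio : ∀ k l, S (P1 k) (P2 l) = if k = l then H k else 0) (A : ℕ → Mat p)
    {k m : ℕ} (hk : k < m) :
    S (P1 k) (∑ j ∈ range m, cm (A j) * P2 j) = H k * (A k)ᵀ := by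
  rw [hS.sum_cm_mul_right, sum_eq_single_of_mem k (mem_range.2 hk), hbio, if_pos rfl]
  intro j _ hj
  rw [hbio, if_neg (Ne.symm hj), Matrix.zero_mul]

lemma apply_eq_zero_of_biorthogonal (hS : IsSesq S) (hmon1 : ∀ k, MonicDeg (P1 k) k)
    (hbio : ∀ k l, S (P1 k) (P2 l) = if k = l then H k else 0)
    {k n : ℕ} (hkn : k < n) {Q : MatPoly p} (hQ : ∀ l, k < l → coeffM Q l = 0) :
    S Q (P2 n) = 0 := by
  obtain ⟨B, rfl⟩ := exists_eq_sum_cm_mul_of_monicDeg hmon1 hQ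
  rw [hS.sum_cm_mul_left]
  refine sum_eq_zero fun j hj => ?_
  rw [hbio, if_neg (by have := mem_range.1 hj; omega), Matrix.mul_zero]

end IsSesq

end Paper

open Paper in
theorem statement5_general (p : ℕ) (u uh : MatPoly p → MatPoly p → Mat p)
    (hu : IsSesq u) (huh : IsSesq uh)
    (P1 P2 hP1 hP2 : ℕ → MatPoly p) (H Hh : ℕ → Mat p)
    (hmon1 : ∀ k, MonicDeg (P1 k) k) (hmon2 : ∀ k, MonicDeg (P2 k) k)
    (hmon1h : ∀ k, MonicDeg (hP1 k) k) (hmon2h : ∀ k, MonicDeg (hP2 k) k)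
    (hH : ∀ k, IsUnit (H k))
    (hbio : ∀ k l, u (P1 k) (P2 l) = if k = l then H k else 0)
    (hbioh : ∀ k l, uh (hP1 k) (hP2 l) = if k = l then Hh k else 0)
    (n : ℕ) :
    (hP2 n)ᵀ = (P2 n)ᵀ
      - ∑ k ∈ Finset.range n,
          (P2 k)ᵀ * cm ((H k)⁻¹ * (uh (P1 k) (hP2 n) - u (P1 k) (hP2 n))) := by
  obtain ⟨A, hA⟩ := exists_eq_sum_cm_mul_of_monicDeg hmon2 (hmon2h n).2
  have hAn : A n = 1 := by
    rw [← coeffM_sum_cm_mul_self hmon2 A n, ← hA, (hmon2h n).1]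
  have hterm : ∀ k ∈ range n,
      (P2 k)ᵀ * cm ((H k)⁻¹ * (uh (P1 k) (hP2 n) - u (P1 k) (hP2 n)))
        = -((P2 k)ᵀ * cm (A k)ᵀ) := by
    intro k hk
    rw [mem_range] at hk
    rw [huh.apply_eq_zero_of_biorthogonal hmon1h hbioh hk (hmon1 k).2, hA,
      hu.apply_sum_cm_mul_of_biorthogonal hbio A (by omega), zero_sub, Matrix.mul_neg,
      nonsing_inv_mul_cancel_left _ _ ((isUnit_iff_isUnit_det _).1 (hH k)), cm_neg, mul_neg]
  rw [sum_congr rfl hterm, sum_neg_distrib, sub_neg_eq_add, hA, transpose_sum, sum_range_succ,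
    hAn, transpose_cm_mul, transpose_one, cm_one, mul_one, add_comm]
  simp only [transpose_cm_mul]

open Paper in
/-- For the additive perturbation `û = u + v` (`v := û − u`),
`(P̂^{[2]}_n(z))ᵀ = (P^{[2]}_n(z))ᵀ − ⟨K_{n−1}(x,z), P̂^{[2]}_n(y)⟩_v`, with `K_{n−1}` the
CD kernel of `u`, the pairing being expanded via the sesquilinearity of the form. -/
theorem statement5 (p : ℕ) (u uh : MatPoly p → MatPoly p → Mat p)
    (hu : IsSesq u) (huh : IsSesq uh)
    (P1 P2 hP1 hP2 : ℕ → MatPoly p) (H Hh : ℕ → Mat p)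
    (hmon1 : ∀ k, MonicDeg (P1 k) k) (hmon2 : ∀ k, MonicDeg (P2 k) k)
    (hmon1h : ∀ k, MonicDeg (hP1 k) k) (hmon2h : ∀ k, MonicDeg (hP2 k) k)
    (hH : ∀ k, IsUnit (H k)) (hHh : ∀ k, IsUnit (Hh k))
    (hbio : ∀ k l, u (P1 k) (P2 l) = if k = l then H k else 0)
    (hbioh : ∀ k l, uh (hP1 k) (hP2 l) = if k = l then Hh k else 0)
    (n : ℕ) :
    (hP2 n)ᵀ = (P2 n)ᵀ
      - ∑ k ∈ Finset.range n,
          (P2 k)ᵀ * cm ((H k)⁻¹ * (uh (P1 k) (hP2 n) - u (P1 k) (hP2 n))) :=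
  statement5_general p u uh hu huh P1 P2 hP1 hP2 H Hh hmon1 hmon2 hmon1h hmon2h hH hbio hbioh n
end

section
/- (Christoffel–Uvarov formula, nonsingular case) In the Uvarov setting, assume the matrix M_{n−1} := I_{Np} + ⟨𝒥^{[0,1]}_{K_{n−1}}(x),(β)_x⟩ is invertible. Then the perturbed polynomials and norms are given by the quasideterminantal formulas: P̂^{[1]}_n(x) = P^{[1]}_n(x) − ⟨P^{[1]}_n(x),(β)_x⟩ M_{n−1}⁻¹ 𝒥^{[0,1]}_{K_{n−1}}(x), (P̂^{[2]}_n(y))ᵀ = (P^{[2]}_n(y))ᵀ − ⟨K_{n−1}(x,y),(β)_x⟩ M_{n−1}⁻¹ (𝒥_{P^{[2]}_n})ᵀ, and Ĥ_n = H_n + ⟨P^{[1]}_n(x),(β)_x⟩ M_{n−1}⁻¹ (𝒥_{P^{[2]}_n})ᵀ. -/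
open Polynomial Matrix Finset

namespace Paper

variable {p : ℕ}

/-- Jet index set: pairs (point j, derivative order m < κ j). -/
abbrev JIdx (q : ℕ) (κ : Fin q → ℕ) := Σ j : Fin q, Fin (κ j)

/-- The `a`-th `p×p` block (a jet index) of the column jet `𝒥^{[0,1]}_{K_{n-1}}(x)`:
the `y`-jet of the Christoffel–Darboux kernel `K_{n-1}(x,y)` at the point `xpt a.1`,
derivative order `a.2`, divided by `(a.2)!`; a matrix polynomial in `x`. -/
noncomputable def KBlock {q : ℕ} {κ : Fin q → ℕ} (P1 P2 : ℕ → MatPoly p) (H : ℕ → Mat p)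
    (xpt : Fin q → ℂ) (n : ℕ) (a : JIdx q κ) : MatPoly p :=
  ∑ k ∈ Finset.range n,
    cm ((((Nat.factorial (a.2 : ℕ) : ℂ))⁻¹ • evM (xpt a.1) (dM^[(a.2 : ℕ)] (P2 k)))ᵀ * (H k)⁻¹)
      * P1 k

/-- The `Np×Np` matrix of pairings `⟨𝒥^{[0,1]}_{K_{n-1}}(x), (β)_x⟩`. -/
noncomputable def PairM {q : ℕ} {κ : Fin q → ℕ} (β : JIdx q κ → MatPoly p → Mat p)
    (P1 P2 : ℕ → MatPoly p) (H : ℕ → Mat p) (xpt : Fin q → ℂ) (n : ℕ) :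
    Matrix (JIdx q κ × Fin p) (JIdx q κ × Fin p) ℂ :=
  Matrix.of fun a b => (β b.1 (KBlock P1 P2 H xpt n a.1)) a.2 b.2

/-- The `p×Np` row of pairings `⟨P(x), (β)_x⟩`. -/
noncomputable def RowB {q : ℕ} {κ : Fin q → ℕ} (β : JIdx q κ → MatPoly p → Mat p)
    (P : MatPoly p) : Matrix (Fin p) (JIdx q κ × Fin p) ℂ :=
  Matrix.of fun s b => (β b.1 P) s b.2

/-- The `p×Np` spectral jet `𝒥_f` of a matrix polynomial at the points `xpt j`,
with multiplicities `κ j`. -/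
noncomputable def JetRow {q : ℕ} (κ : Fin q → ℕ) (xpt : Fin q → ℂ) (f : MatPoly p) :
    Matrix (Fin p) (JIdx q κ × Fin p) ℂ :=
  Matrix.of fun s a =>
    ((Nat.factorial (a.1.2 : ℕ) : ℂ)⁻¹ • evM (xpt a.1.1) (dM^[(a.1.2 : ℕ)] f)) s a.2

/-- The `Np×p` jet `𝒥^{[0,1]}_{K_{n-1}}(x)` as a matrix with polynomial entries. -/
noncomputable def Jet01 {q : ℕ} (κ : Fin q → ℕ) (P1 P2 : ℕ → MatPoly p) (H : ℕ → Mat p)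
    (xpt : Fin q → ℂ) (n : ℕ) : Matrix (JIdx q κ × Fin p) (Fin p) (Polynomial ℂ) :=
  Matrix.of fun a t => (KBlock (κ := κ) P1 P2 H xpt n a.1) a.2 t

end Paper

namespace Paper

/-- The row `⟨K_{n−1}(x,y),(β)_x⟩ ∈ ℂ^{p×Np}`, a matrix with entries polynomial in `y`. -/
noncomputable def RowK {p q : ℕ} {κ : Fin q → ℕ} (β : JIdx q κ → MatPoly p → Mat p)
    (P1 P2 : ℕ → MatPoly p) (H : ℕ → Mat p) (n : ℕ) :
    Matrix (Fin p) (JIdx q κ × Fin p) (Polynomial ℂ) :=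
  Matrix.of fun s b =>
    (∑ k ∈ Finset.range n, (P2 k)ᵀ * cm ((H k)⁻¹ * β b.1 (P1 k))) s b.2

end Paper

/-!
Expand the monic polynomial `P̂¹ₙ` in the `u`-biorthogonal basis `{P¹ₗ}`: its coefficients are
`u(P̂¹ₙ, P²ₗ) Hₗ⁻¹`, and as `P̂¹ₙ` is `û`-orthogonal to `P²ₗ` for `l < n`, the Uvarov term gives
`u(P̂¹ₙ, P²ₗ) = -⟨P̂¹ₙ, (β)⟩ 𝒥_{P²ₗ}ᵀ`. Hence `P̂¹ₙ = P¹ₙ - ⟨P̂¹ₙ, (β)⟩ 𝒥^{[0,1]}_{K_{n-1}}`, and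
pairing this identity with the functionals `β` yields the linear system
`⟨P̂¹ₙ, (β)⟩ M_{n-1} = ⟨P¹ₙ, (β)⟩`. Symmetrically, expanding `P̂²ₙ` in `{P²ₗ}` and taking spectral
jets yields `M_{n-1} 𝒥_{P̂²ₙ}ᵀ = 𝒥_{P²ₙ}ᵀ`. Finally `Ĥₙ = û(P̂¹ₙ, P²ₙ) = Hₙ + ⟨P̂¹ₙ, (β)⟩ 𝒥_{P²ₙ}ᵀ`.
-/

namespace Paper

section Biorthogonal

variable {p : ℕ}

def IsLeftLinear {ι : Type*} (f : MatPoly p → Matrix (Fin p) ι ℂ) : Prop :=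
  ∀ (A : Mat p) (P Q : MatPoly p), f (cm A * P + Q) = A * f P + f Q

namespace IsLeftLinear

variable {ι : Type*} {f : MatPoly p → Matrix (Fin p) ι ℂ} (hf : IsLeftLinear f)
include hf

lemma map_add (P Q : MatPoly p) : f (P + Q) = f P + f Q := by
  simpa [cm_one] using hf 1 P Q

lemma map_sub (P Q : MatPoly p) : f (P - Q) = f P - f Q :=
  (AddMonoidHom.mk' f hf.map_add).map_sub P Q

lemma map_cm_mul (A : Mat p) (P : MatPoly p) : f (cm A * P) = A * f P := by
  have h0 : f 0 = 0 := (AddMonoidHom.mk' f hf.map_add).map_zero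
  simpa [h0] using hf A P 0

lemma map_sum_cm_mul {κ : Type*} (s : Finset κ) (A : κ → Mat p) (P : κ → MatPoly p) :
    f (∑ i ∈ s, cm (A i) * P i) = ∑ i ∈ s, A i * f (P i) := by
  rw [← Finset.sum_congr rfl fun i _ => hf.map_cm_mul (A i) (P i)]
  exact map_sum (AddMonoidHom.mk' f hf.map_add) _ s

end IsLeftLinear

namespace IsSesq

variable {S : MatPoly p → MatPoly p → Mat p} (hS : IsSesq S)
include hS

lemma left (R : MatPoly p) : IsLeftLinear (S · R) := fun A P Q => hS.1 A P Q R

-- Facts about the second slot are read off from the first slot of this transposed form.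
lemma swap : IsSesq fun P Q => (S Q P)ᵀ :=
  ⟨fun A P Q R => by simp [hS.2 A R P Q, Matrix.transpose_mul],
   fun A P Q R => by simp [hS.1 A Q R P, Matrix.transpose_mul]⟩

lemma sub_right (P Q R : MatPoly p) : S P (Q - R) = S P Q - S P R := by
  simpa using congrArg Matrix.transpose ((hS.swap.left P).map_sub Q R)

end IsSesq

def IsBiorth (S : MatPoly p → MatPoly p → Mat p) (P Q : ℕ → MatPoly p) (H : ℕ → Mat p) :
    Prop :=
  ∀ k l, S (P k) (Q l) = if k = l then H k else 0

lemma IsBiorth.swap {S : MatPoly p → MatPoly p → Mat p} {P Q : ℕ → MatPoly p} {H : ℕ → Mat p}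
    (hb : IsBiorth S P Q H) : IsBiorth (fun P Q => (S Q P)ᵀ) Q P fun k => (H k)ᵀ := by
  intro k l
  simp only [hb l k]
  split_ifs <;> simp_all

def DegLt (R : MatPoly p) (n : ℕ) : Prop := ∀ k, n ≤ k → coeffM R k = 0

lemma MonicDeg.degLt {P : MatPoly p} {k n : ℕ} (hP : MonicDeg P k) (hkn : k < n) :
    DegLt P n := fun _ hj => hP.2 _ (hkn.trans_le hj)

lemma MonicDeg.degLt_sub {P Q : MatPoly p} {n : ℕ} (hP : MonicDeg P n) (hQ : MonicDeg Q n) :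
    DegLt (P - Q) n := by
  intro k hk
  rw [coeffM_sub]
  rcases hk.eq_or_lt with rfl | hk
  · rw [hP.1, hQ.1, sub_self]
  · rw [hP.2 k hk, hQ.2 k hk, sub_self]

lemma DegLt.eq_zero {R : MatPoly p} (hR : DegLt R 0) : R = 0 := by
  refine Matrix.ext fun i j => Polynomial.ext fun k => ?_
  simpa [coeffM] using congrFun (congrFun (hR k k.zero_le) i) j

lemma DegLt.exists_eq_sum {P : ℕ → MatPoly p} (hP : ∀ k, MonicDeg (P k) k) {n : ℕ}
    {R : MatPoly p} (hR : DegLt R n) :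
    ∃ C : ℕ → Mat p, R = ∑ k ∈ Finset.range n, cm (C k) * P k := by
  induction n generalizing R with
  | zero => exact ⟨0, by simpa using hR.eq_zero⟩
  | succ n ih =>
    have hlower : DegLt (R - cm (coeffM R n) * P n) n := by
      intro k hk
      rw [coeffM_sub, coeffM_cm_mul]
      rcases hk.eq_or_lt with rfl | hk
      · rw [(hP n).1, mul_one, sub_self]
      · rw [hR k hk, (hP n).2 k hk, mul_zero, sub_self]
    obtain ⟨C, hC⟩ := ih hlower
    refine ⟨Function.update C n (coeffM R n), ?_⟩
    rw [Finset.sum_range_succ, Function.update_self,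
      Finset.sum_congr rfl fun k hk => by
        rw [Function.update_of_ne (Finset.mem_range.mp hk).ne], ← hC, sub_add_cancel]

namespace IsBiorth

variable {S : MatPoly p → MatPoly p → Mat p} {P Q : ℕ → MatPoly p} {H : ℕ → Mat p}
  (hS : IsSesq S) (hb : IsBiorth S P Q H)
include hS hb

lemma apply_sum_left (C : ℕ → Mat p) (n l : ℕ) :
    S (∑ k ∈ Finset.range n, cm (C k) * P k) (Q l) = if l < n then C l * H l else 0 := by
  simp only [(hS.left _).map_sum_cm_mul, hb _ l, mul_ite, mul_zero, Finset.sum_ite_eq',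
    Finset.mem_range]

lemma apply_left_eq_zero_of_degLt (hP : ∀ k, MonicDeg (P k) k) {R : MatPoly p} {n : ℕ}
    (hR : DegLt R n) : S R (Q n) = 0 := by
  obtain ⟨C, rfl⟩ := hR.exists_eq_sum hP
  simp [hb.apply_sum_left hS]

lemma apply_right_eq_zero_of_degLt (hQ : ∀ k, MonicDeg (Q k) k) {R : MatPoly p} {n : ℕ}
    (hR : DegLt R n) : S (P n) R = 0 :=
  Matrix.transpose_eq_zero.mp (hb.swap.apply_left_eq_zero_of_degLt hS.swap hQ hR)

lemma eq_add_sum_of_monicDeg (hP : ∀ k, MonicDeg (P k) k) (hH : ∀ k, IsUnit (H k))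
    {R : MatPoly p} {n : ℕ} (hR : MonicDeg R n) :
    R = P n + ∑ l ∈ Finset.range n, cm (S R (Q l) * (H l)⁻¹) * P l := by
  obtain ⟨C, hC⟩ := (hR.degLt_sub (hP n)).exists_eq_sum hP
  rw [sub_eq_iff_eq_add'] at hC
  conv_lhs => rw [hC]
  congr 1
  refine Finset.sum_congr rfl fun l hl => ?_
  have hl := Finset.mem_range.mp hl
  rw [hC, (hS.left _).map_add, hb.apply_sum_left hS, hb n l, if_neg hl.ne', if_pos hl, zero_add,
    Matrix.mul_nonsing_inv_cancel_right _ _ ((Matrix.isUnit_iff_isUnit_det _).mp (hH l))]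

lemma eq_add_sum_of_monicDeg_right (hQ : ∀ k, MonicDeg (Q k) k) (hH : ∀ k, IsUnit (H k))
    {R : MatPoly p} {n : ℕ} (hR : MonicDeg R n) :
    R = Q n + ∑ l ∈ Finset.range n, cm ((H l)⁻¹ * S (P l) R)ᵀ * Q l := by
  have hHt : ∀ k, IsUnit (H k)ᵀ := fun k => (Matrix.isUnit_transpose _).mpr (hH k)
  simpa [Matrix.transpose_mul, Matrix.transpose_nonsing_inv] using
    hb.swap.eq_add_sum_of_monicDeg hS.swap hQ hHt hR

end IsBiorth

end Biorthogonal

section Uvarov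

variable {p q : ℕ} {κ : Fin q → ℕ}

lemma isLeftLinear_rowB {β : JIdx q κ → MatPoly p → Mat p} (hβ : ∀ a, IsLeftLinear (β a)) :
    IsLeftLinear (RowB β) := by
  intro A P Q
  ext s ⟨b, j⟩
  simp [RowB, hβ b A P Q, Matrix.mul_apply]

lemma dM_iterate_apply (m : ℕ) (P : MatPoly p) (i j : Fin p) :
    (dM^[m] P) i j = derivative^[m] (P i j) := by
  induction m generalizing P with
  | zero => rfl
  | succ m ih => exact ih (dM P)

lemma isLeftLinear_jetRow (xpt : Fin q → ℂ) : IsLeftLinear (JetRow (p := p) κ xpt) := by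
  intro A P Q
  ext s ⟨a, i⟩
  simp only [JetRow, evM, cm, dM_iterate_apply, Matrix.add_apply, Matrix.mul_apply,
    Matrix.map_apply, iterate_map_add, iterate_derivative_sum, iterate_derivative_C_mul, eval_add,
    eval_finsetSum, eval_mul, eval_C, Matrix.smul_apply, Matrix.of_apply, smul_eq_mul, mul_add,
    Finset.mul_sum, mul_left_comm]

lemma sum_smul_mul_evM_eq_rowB_mul (β : JIdx q κ → MatPoly p → Mat p) (xpt : Fin q → ℂ)
    (P Q : MatPoly p) :
    ∑ a : JIdx q κ, (Nat.factorial (a.2 : ℕ) : ℂ)⁻¹ •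
        (β a P * evM (xpt a.1) (dM^[(a.2 : ℕ)] Qᵀ)) = RowB β P * (JetRow κ xpt Q)ᵀ := by
  ext s t
  simp [RowB, JetRow, evM, dM_iterate_apply, Matrix.mul_apply, Matrix.sum_apply,
    Fintype.sum_prod_type, Finset.mul_sum, mul_left_comm]

-- `Jet01`, `PairM` and `RowK` unfold along `K_{n-1}(x, y) = ∑_{l<n} P²ₗ(y)ᵀ Hₗ⁻¹ P¹ₗ(x)`.
lemma jet01_eq_sum (P1 P2 : ℕ → MatPoly p) (H : ℕ → Mat p) (xpt : Fin q → ℂ) (n : ℕ) :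
    Jet01 κ P1 P2 H xpt n
      = ∑ l ∈ Finset.range n, ((JetRow κ xpt (P2 l))ᵀ * (H l)⁻¹).map C * P1 l := by
  refine Matrix.ext fun ⟨a, i⟩ t => ?_
  simp [Jet01, KBlock, JetRow, cm, Matrix.mul_apply, Matrix.sum_apply, Finset.mul_sum, mul_assoc]

lemma pairM_eq_sum {β : JIdx q κ → MatPoly p → Mat p} (hβ : ∀ a, IsLeftLinear (β a))
    (P1 P2 : ℕ → MatPoly p) (H : ℕ → Mat p) (xpt : Fin q → ℂ) (n : ℕ) :
    PairM β P1 P2 H xpt n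
      = ∑ l ∈ Finset.range n, (JetRow κ xpt (P2 l))ᵀ * (H l)⁻¹ * RowB β (P1 l) := by
  ext ⟨a, i⟩ ⟨b, j⟩
  simp [PairM, KBlock, (hβ b).map_sum_cm_mul, JetRow, RowB, Matrix.mul_apply, Matrix.sum_apply,
    Finset.mul_sum, Finset.sum_mul, mul_assoc]
  exact Finset.sum_congr rfl fun _ _ => Finset.sum_comm

lemma rowK_eq_sum (β : JIdx q κ → MatPoly p → Mat p) (P1 P2 : ℕ → MatPoly p) (H : ℕ → Mat p)
    (n : ℕ) :
    RowK β P1 P2 H n = ∑ l ∈ Finset.range n, (P2 l)ᵀ * ((H l)⁻¹ * RowB β (P1 l)).map C := by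
  ext s ⟨b, j⟩
  simp [RowK, RowB, cm, Matrix.mul_apply, Matrix.sum_apply]

variable {xpt : Fin q → ℂ} {u uh : MatPoly p → MatPoly p → Mat p}
  {β : JIdx q κ → MatPoly p → Mat p} {P1 P2 hP1 hP2 : ℕ → MatPoly p} {H Hh : ℕ → Mat p}

lemma perturbed_left_eq_sub_sum (hu : IsSesq u) (huh : IsSesq uh)
    (hv : ∀ P Q, uh P Q = u P Q + RowB β P * (JetRow κ xpt Q)ᵀ)
    (hmon1 : ∀ k, MonicDeg (P1 k) k) (hmon2 : ∀ k, MonicDeg (P2 k) k)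
    (hmon1h : ∀ k, MonicDeg (hP1 k) k) (hmon2h : ∀ k, MonicDeg (hP2 k) k)
    (hH : ∀ k, IsUnit (H k)) (hbio : IsBiorth u P1 P2 H) (hbioh : IsBiorth uh hP1 hP2 Hh)
    (n : ℕ) :
    hP1 n = P1 n - ∑ l ∈ Finset.range n,
      cm (RowB β (hP1 n) * (JetRow κ xpt (P2 l))ᵀ * (H l)⁻¹) * P1 l := by
  refine (hbio.eq_add_sum_of_monicDeg hu hmon1 hH (hmon1h n)).trans ?_
  rw [sub_eq_add_neg, ← Finset.sum_neg_distrib]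
  congr 1
  refine Finset.sum_congr rfl fun l hl => ?_
  have horth : uh (hP1 n) (P2 l) = 0 :=
    hbioh.apply_right_eq_zero_of_degLt huh hmon2h ((hmon2 l).degLt (Finset.mem_range.mp hl))
  rw [hv, add_eq_zero_iff_eq_neg] at horth
  rw [horth, Matrix.neg_mul, cm_neg, Matrix.neg_mul]

lemma perturbed_right_eq_sub_sum (hu : IsSesq u) (huh : IsSesq uh)
    (hv : ∀ P Q, uh P Q = u P Q + RowB β P * (JetRow κ xpt Q)ᵀ)
    (hmon1 : ∀ k, MonicDeg (P1 k) k) (hmon2 : ∀ k, MonicDeg (P2 k) k)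
    (hmon1h : ∀ k, MonicDeg (hP1 k) k) (hmon2h : ∀ k, MonicDeg (hP2 k) k)
    (hH : ∀ k, IsUnit (H k)) (hbio : IsBiorth u P1 P2 H) (hbioh : IsBiorth uh hP1 hP2 Hh)
    (n : ℕ) :
    hP2 n = P2 n - ∑ l ∈ Finset.range n,
      cm ((H l)⁻¹ * RowB β (P1 l) * (JetRow κ xpt (hP2 n))ᵀ)ᵀ * P2 l := by
  refine (hbio.eq_add_sum_of_monicDeg_right hu hmon2 hH (hmon2h n)).trans ?_
  rw [sub_eq_add_neg, ← Finset.sum_neg_distrib]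
  congr 1
  refine Finset.sum_congr rfl fun l hl => ?_
  have horth : uh (P1 l) (hP2 n) = 0 :=
    hbioh.apply_left_eq_zero_of_degLt huh hmon1h ((hmon1 l).degLt (Finset.mem_range.mp hl))
  rw [hv, add_eq_zero_iff_eq_neg] at horth
  rw [horth, Matrix.mul_neg, Matrix.transpose_neg, cm_neg, Matrix.neg_mul, Matrix.mul_assoc]

lemma perturbed_norm_eq (hu : IsSesq u) (huh : IsSesq uh)
    (hv : ∀ P Q, uh P Q = u P Q + RowB β P * (JetRow κ xpt Q)ᵀ)
    (hmon1 : ∀ k, MonicDeg (P1 k) k) (hmon2 : ∀ k, MonicDeg (P2 k) k)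
    (hmon1h : ∀ k, MonicDeg (hP1 k) k) (hmon2h : ∀ k, MonicDeg (hP2 k) k)
    (hbio : IsBiorth u P1 P2 H) (hbioh : IsBiorth uh hP1 hP2 Hh) (n : ℕ) :
    Hh n = H n + RowB β (hP1 n) * (JetRow κ xpt (P2 n))ᵀ := by
  have hright : uh (hP1 n) (hP2 n - P2 n) = 0 :=
    hbioh.apply_right_eq_zero_of_degLt huh hmon2h ((hmon2h n).degLt_sub (hmon2 n))
  have hleft : u (hP1 n - P1 n) (P2 n) = 0 :=
    hbio.apply_left_eq_zero_of_degLt hu hmon1 ((hmon1h n).degLt_sub (hmon1 n))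
  rw [huh.sub_right, sub_eq_zero] at hright
  rw [(hu.left _).map_sub, sub_eq_zero] at hleft
  calc Hh n = uh (hP1 n) (hP2 n) := by rw [hbioh n n, if_pos rfl]
    _ = u (P1 n) (P2 n) + RowB β (hP1 n) * (JetRow κ xpt (P2 n))ᵀ := by rw [hright, hv, hleft]
    _ = H n + RowB β (hP1 n) * (JetRow κ xpt (P2 n))ᵀ := by
      rw [hbio n n, if_pos rfl]

lemma eq_sub_map_mul_jet01 {R : MatPoly p} {X : Matrix (Fin p) (JIdx q κ × Fin p) ℂ} {n : ℕ}
    (hR : R = P1 n - ∑ l ∈ Finset.range n, cm (X * (JetRow κ xpt (P2 l))ᵀ * (H l)⁻¹) * P1 l) :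
    R = P1 n - X.map C * Jet01 κ P1 P2 H xpt n := by
  simp only [hR, jet01_eq_sum, Matrix.mul_sum, ← Matrix.mul_assoc, ← Matrix.map_mul, cm]

lemma rowB_mul_one_add_pairM (hβ : ∀ a, IsLeftLinear (β a)) {R : MatPoly p} {n : ℕ}
    (hR : R = P1 n - ∑ l ∈ Finset.range n,
      cm (RowB β R * (JetRow κ xpt (P2 l))ᵀ * (H l)⁻¹) * P1 l) :
    RowB β R * (1 + PairM β P1 P2 H xpt n) = RowB β (P1 n) := by
  have h := congrArg (RowB β) hR
  rw [(isLeftLinear_rowB hβ).map_sub, (isLeftLinear_rowB hβ).map_sum_cm_mul] at h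
  rw [Matrix.mul_add, Matrix.mul_one, pairM_eq_sum hβ, Matrix.mul_sum, ← eq_sub_iff_add_eq]
  simpa only [Matrix.mul_assoc] using h

lemma transpose_eq_sub_rowK_mul {R : MatPoly p} {Y : Matrix (JIdx q κ × Fin p) (Fin p) ℂ}
    {n : ℕ}
    (hR : R = P2 n - ∑ l ∈ Finset.range n, cm ((H l)⁻¹ * RowB β (P1 l) * Y)ᵀ * P2 l) :
    Rᵀ = (P2 n)ᵀ - RowK β P1 P2 H n * Y.map C := by
  simp only [hR, Matrix.transpose_sub, Matrix.transpose_sum, transpose_cm_mul,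
    Matrix.transpose_transpose, rowK_eq_sum, Matrix.sum_mul, Matrix.mul_assoc, ← Matrix.map_mul]
  rfl

lemma one_add_pairM_mul_jetRow (hβ : ∀ a, IsLeftLinear (β a)) {R : MatPoly p} {n : ℕ}
    (hR : R = P2 n - ∑ l ∈ Finset.range n,
      cm ((H l)⁻¹ * RowB β (P1 l) * (JetRow κ xpt R)ᵀ)ᵀ * P2 l) :
    (1 + PairM β P1 P2 H xpt n) * (JetRow κ xpt R)ᵀ = (JetRow κ xpt (P2 n))ᵀ := by
  have h := congrArg (fun R => (JetRow κ xpt R)ᵀ) hR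
  simp only [(isLeftLinear_jetRow xpt).map_sub, (isLeftLinear_jetRow xpt).map_sum_cm_mul,
    Matrix.transpose_sub, Matrix.transpose_sum, Matrix.transpose_mul,
    Matrix.transpose_transpose] at h
  rw [Matrix.add_mul, Matrix.one_mul, pairM_eq_sum hβ, Matrix.sum_mul, ← eq_sub_iff_add_eq]
  simpa only [Matrix.mul_assoc] using h

end Uvarov

end Paper

open Paper in
theorem statement11_general (p q : ℕ) (κ : Fin q → ℕ) (xpt : Fin q → ℂ)
    (u uh : MatPoly p → MatPoly p → Mat p) (hu : IsSesq u) (huh : IsSesq uh)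
    (β : JIdx q κ → MatPoly p → Mat p)
    (hβ : ∀ a (A : Mat p) (P Q : MatPoly p), β a (cm A * P + Q) = A * β a P + β a Q)
    (hv : ∀ P Q : MatPoly p, uh P Q = u P Q + ∑ a : JIdx q κ,
        (Nat.factorial (a.2 : ℕ) : ℂ)⁻¹ • (β a P * evM (xpt a.1) (dM^[(a.2 : ℕ)] Qᵀ)))
    (P1 P2 hP1 hP2 : ℕ → MatPoly p) (H Hh : ℕ → Mat p)
    (hmon1 : ∀ k, MonicDeg (P1 k) k) (hmon2 : ∀ k, MonicDeg (P2 k) k)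
    (hmon1h : ∀ k, MonicDeg (hP1 k) k) (hmon2h : ∀ k, MonicDeg (hP2 k) k)
    (hH : ∀ k, IsUnit (H k))
    (hbio : ∀ k l, u (P1 k) (P2 l) = if k = l then H k else 0)
    (hbioh : ∀ k l, uh (hP1 k) (hP2 l) = if k = l then Hh k else 0)
    (n : ℕ)
    (hM : IsUnit (1 + PairM β P1 P2 H xpt n)) :
    hP1 n = P1 n
      - (RowB β (P1 n)).map Polynomial.C
          * ((1 + PairM β P1 P2 H xpt n)⁻¹).map Polynomial.C
          * Jet01 κ P1 P2 H xpt n ∧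
    (hP2 n)ᵀ = (P2 n)ᵀ
      - RowK β P1 P2 H n
          * ((1 + PairM β P1 P2 H xpt n)⁻¹).map Polynomial.C
          * ((JetRow κ xpt (P2 n))ᵀ).map Polynomial.C ∧
    Hh n = H n
      + RowB β (P1 n) * (1 + PairM β P1 P2 H xpt n)⁻¹ * (JetRow κ xpt (P2 n))ᵀ := by
  have hv' (P Q : MatPoly p) : uh P Q = u P Q + RowB β P * (JetRow κ xpt Q)ᵀ := by
    rw [hv, sum_smul_mul_evM_eq_rowB_mul]
  have hM' : IsUnit (1 + PairM β P1 P2 H xpt n).det := (Matrix.isUnit_iff_isUnit_det _).mp hM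
  have hleft := perturbed_left_eq_sub_sum hu huh hv' hmon1 hmon2 hmon1h hmon2h hH hbio hbioh n
  have hright := perturbed_right_eq_sub_sum hu huh hv' hmon1 hmon2 hmon1h hmon2h hH hbio hbioh n
  have hrow : RowB β (hP1 n) = RowB β (P1 n) * (1 + PairM β P1 P2 H xpt n)⁻¹ := by
    rw [← rowB_mul_one_add_pairM hβ hleft, Matrix.mul_nonsing_inv_cancel_right _ _ hM']
  have hjet : (JetRow κ xpt (hP2 n))ᵀ
      = (1 + PairM β P1 P2 H xpt n)⁻¹ * (JetRow κ xpt (P2 n))ᵀ := by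
    rw [← one_add_pairM_mul_jetRow hβ hright, Matrix.nonsing_inv_mul_cancel_left _ _ hM']
  refine ⟨?_, ?_, ?_⟩
  · rw [eq_sub_map_mul_jet01 hleft, hrow, Matrix.map_mul]
  · rw [transpose_eq_sub_rowK_mul hright, hjet, Matrix.map_mul, Matrix.mul_assoc]
  · rw [perturbed_norm_eq hu huh hv' hmon1 hmon2 hmon1h hmon2h hbio hbioh n, hrow]

open Paper in
/-- Christoffel–Uvarov formulas, nonsingular case: if
`M_{n−1} := I_{Np} + ⟨𝒥^{[0,1]}_{K_{n−1}}(x),(β)_x⟩` is invertible, then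
`P̂^{[1]}_n = P^{[1]}_n − ⟨P^{[1]}_n,(β)⟩ M_{n−1}⁻¹ 𝒥^{[0,1]}_{K_{n−1}}`,
`(P̂^{[2]}_n)ᵀ = (P^{[2]}_n)ᵀ − ⟨K_{n−1}(x,y),(β)_x⟩ M_{n−1}⁻¹ (𝒥_{P^{[2]}_n})ᵀ`, and
`Ĥ_n = H_n + ⟨P^{[1]}_n,(β)⟩ M_{n−1}⁻¹ (𝒥_{P^{[2]}_n})ᵀ`. -/
theorem statement11 (p q : ℕ) (κ : Fin q → ℕ) (hκ : ∀ j, 0 < κ j) (xpt : Fin q → ℂ)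
    (hx : Function.Injective xpt)
    (u uh : MatPoly p → MatPoly p → Mat p) (hu : IsSesq u) (huh : IsSesq uh)
    (β : JIdx q κ → MatPoly p → Mat p)
    (hβ : ∀ a (A : Mat p) (P Q : MatPoly p), β a (cm A * P + Q) = A * β a P + β a Q)
    (hv : ∀ P Q : MatPoly p, uh P Q = u P Q + ∑ a : JIdx q κ,
        (Nat.factorial (a.2 : ℕ) : ℂ)⁻¹ • (β a P * evM (xpt a.1) (dM^[(a.2 : ℕ)] Qᵀ)))
    (P1 P2 hP1 hP2 : ℕ → MatPoly p) (H Hh : ℕ → Mat p)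
    (hmon1 : ∀ k, MonicDeg (P1 k) k) (hmon2 : ∀ k, MonicDeg (P2 k) k)
    (hmon1h : ∀ k, MonicDeg (hP1 k) k) (hmon2h : ∀ k, MonicDeg (hP2 k) k)
    (hH : ∀ k, IsUnit (H k)) (hHh : ∀ k, IsUnit (Hh k))
    (hbio : ∀ k l, u (P1 k) (P2 l) = if k = l then H k else 0)
    (hbioh : ∀ k l, uh (hP1 k) (hP2 l) = if k = l then Hh k else 0)
    (n : ℕ)
    (hM : IsUnit (1 + PairM β P1 P2 H xpt n)) :
    hP1 n = P1 n
      - (RowB β (P1 n)).map Polynomial.C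
          * ((1 + PairM β P1 P2 H xpt n)⁻¹).map Polynomial.C
          * Jet01 κ P1 P2 H xpt n ∧
    (hP2 n)ᵀ = (P2 n)ᵀ
      - RowK β P1 P2 H n
          * ((1 + PairM β P1 P2 H xpt n)⁻¹).map Polynomial.C
          * ((JetRow κ xpt (P2 n))ᵀ).map Polynomial.C ∧
    Hh n = H n
      + RowB β (P1 n) * (1 + PairM β P1 P2 H xpt n)⁻¹ * (JetRow κ xpt (P2 n))ᵀ :=
  statement11_general p q κ xpt u uh hu huh β hβ hv P1 P2 hP1 hP2 H Hh hmon1 hmon2 hmon1h hmon2h hH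
    hbio hbioh n hM
end
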